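/- Let α be a C*-factorization of H and β a C*-factorization of K over a C*-base (𝔥,𝔅,𝔅†) and its opposite. Then there is a unitary Σ from the relative tensor product H ⊗_{α,𝔥,β} K onto K ⊗_{β,𝔥,α} H determined by ξ ⊗ ζ ⊗ η ↦ η ⊗ ζ ⊗ ξ for ξ ∈ α, ζ ∈ 𝔥, η ∈ β (where both spaces are realized as completions of α ⊙ 𝔥 ⊙ β, resp. β ⊙ 𝔥 ⊙ α). -/

import Mathlib

noncomputable section
open ContinuousLinearMap

/-- Closed linear span of a subset of a complex normed space. -/
def clspan {E : Type*} [NormedAddCommGroup E] [NormedSpace ℂ E] (S : Set E) : Set E :=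
  ((Submodule.span ℂ S).topologicalClosure : Set E)

/-!
Both relative tensor products are spanned by elementary tensors whose Gram matrices agree:
`⟨ξ ⊗ ζ ⊗ η, ξ' ⊗ ζ' ⊗ η'⟩ = ⟨ζ, (ξ*ξ')(η*η')ζ'⟩` and the flipped products give
`⟨ζ, (η*η')(ξ*ξ')ζ'⟩`, which coincide because `ξ*ξ' ∈ 𝔅` and `η*η' ∈ 𝔅†` commute.
Two total families with the same Gram matrix in Hilbert spaces are related by a unitary.
-/

theorem subset_clspan {E : Type*} [NormedAddCommGroup E] [NormedSpace ℂ E] (S : Set E) :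
    S ⊆ clspan S :=
  Submodule.subset_span.trans (Submodule.le_topologicalClosure _)

section GramMatrix

variable {ι T₁ T₂ : Type*}
  [NormedAddCommGroup T₁] [InnerProductSpace ℂ T₁] [NormedAddCommGroup T₂] [InnerProductSpace ℂ T₂]

theorem inner_linearCombination_eq_of_inner_eq {q₁ : ι → T₁} {q₂ : ι → T₂}
    (hq : ∀ i j, (inner ℂ (q₁ i) (q₁ j) : ℂ) = inner ℂ (q₂ i) (q₂ j)) (v w : ι →₀ ℂ) :
    (inner ℂ (Finsupp.linearCombination ℂ q₁ v) (Finsupp.linearCombination ℂ q₁ w) : ℂ) =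
      inner ℂ (Finsupp.linearCombination ℂ q₂ v) (Finsupp.linearCombination ℂ q₂ w) := by
  simp only [Finsupp.linearCombination_apply, Finsupp.sum, sum_inner, inner_sum,
    inner_smul_left, inner_smul_right, hq]

theorem norm_linearCombination_eq_of_inner_eq {q₁ : ι → T₁} {q₂ : ι → T₂}
    (hq : ∀ i j, (inner ℂ (q₁ i) (q₁ j) : ℂ) = inner ℂ (q₂ i) (q₂ j)) (v : ι →₀ ℂ) :
    ‖Finsupp.linearCombination ℂ q₁ v‖ = ‖Finsupp.linearCombination ℂ q₂ v‖ := by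
  rw [norm_eq_sqrt_re_inner (𝕜 := ℂ), norm_eq_sqrt_re_inner (𝕜 := ℂ),
    inner_linearCombination_eq_of_inner_eq hq]

theorem denseRange_linearCombination {q : ι → T₁}
    (hq : (Submodule.span ℂ (Set.range q)).topologicalClosure = ⊤) :
    DenseRange (Finsupp.linearCombination ℂ q) := by
  rwa [DenseRange, ← LinearMap.coe_range, Submodule.dense_iff_topologicalClosure_eq_top,
    Finsupp.range_linearCombination]

theorem exists_linearIsometryEquiv_of_inner_eq [CompleteSpace T₁] [CompleteSpace T₂]
    {q₁ : ι → T₁} {q₂ : ι → T₂}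
    (hq : ∀ i j, (inner ℂ (q₁ i) (q₁ j) : ℂ) = inner ℂ (q₂ i) (q₂ j))
    (hd₁ : (Submodule.span ℂ (Set.range q₁)).topologicalClosure = ⊤)
    (hd₂ : (Submodule.span ℂ (Set.range q₂)).topologicalClosure = ⊤) :
    ∃ S : T₁ ≃ₗᵢ[ℂ] T₂, ∀ i, S (q₁ i) = q₂ i := by
  let S := (LinearEquiv.refl ℂ (ι →₀ ℂ)).extendOfIsometry (Finsupp.linearCombination ℂ q₁)
    (Finsupp.linearCombination ℂ q₂) (denseRange_linearCombination hd₁)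
    (denseRange_linearCombination hd₂) fun v => (norm_linearCombination_eq_of_inner_eq hq v).symm
  refine ⟨S, fun i => ?_⟩
  calc S (q₁ i) = S (Finsupp.linearCombination ℂ q₁ (Finsupp.single i 1)) := by simp
    _ = q₂ i := (LinearEquiv.extendOfIsometry_eq _ _ _ _ _ _ _).trans (by simp)

end GramMatrix

theorem stmt9_general
    {𝔥 H K T₁ T₂ : Type*} [NormedAddCommGroup 𝔥] [InnerProductSpace ℂ 𝔥] [CompleteSpace 𝔥]
    [NormedAddCommGroup H] [InnerProductSpace ℂ H] [CompleteSpace H]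
    [NormedAddCommGroup K] [InnerProductSpace ℂ K] [CompleteSpace K]
    [NormedAddCommGroup T₁] [InnerProductSpace ℂ T₁] [CompleteSpace T₁]
    [NormedAddCommGroup T₂] [InnerProductSpace ℂ T₂] [CompleteSpace T₂]
    (𝔅 𝔅d : Set (𝔥 →L[ℂ] 𝔥))
    (hcomm : ∀ b ∈ 𝔅, ∀ c ∈ 𝔅d, b ∘L c = c ∘L b)
    -- `α` is a C*-factorization of `H` w.r.t. `(𝔥,𝔅,𝔅†)`:
    (α : Set (𝔥 →L[ℂ] H))
    (hαα : clspan (Set.image2 (fun (ξ ξ' : 𝔥 →L[ℂ] H) => adjoint ξ ∘L ξ') α α) = 𝔅)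
    -- `β` is a C*-factorization of `K` w.r.t. the opposite base `(𝔥,𝔅†,𝔅)`:
    (β : Set (𝔥 →L[ℂ] K))
    (hββ : clspan (Set.image2 (fun (η η' : 𝔥 →L[ℂ] K) => adjoint η ∘L η') β β) = 𝔅d)
    -- `T₁`, `p₁` realize `H ⊗_{α,𝔥,β} K` as completion of `α ⊙ 𝔥 ⊙ β`:
    (p₁ : (𝔥 →L[ℂ] H) → 𝔥 → (𝔥 →L[ℂ] K) → T₁)
    (hp₁dense : (Submodule.span ℂ
        {x : T₁ | ∃ ξ ∈ α, ∃ ζ : 𝔥, ∃ η ∈ β, p₁ ξ ζ η = x}).topologicalClosure = ⊤)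
    (hp₁inner : ∀ ξ ∈ α, ∀ ξ' ∈ α, ∀ η ∈ β, ∀ η' ∈ β, ∀ ζ ζ' : 𝔥,
      inner ℂ (p₁ ξ ζ η) (p₁ ξ' ζ' η')
        = (inner ℂ ζ (((adjoint ξ ∘L ξ') ∘L (adjoint η ∘L η')) ζ') : ℂ))
    -- `T₂`, `p₂` realize `K ⊗_{β,𝔥,α} H` as completion of `β ⊙ 𝔥 ⊙ α`:
    (p₂ : (𝔥 →L[ℂ] K) → 𝔥 → (𝔥 →L[ℂ] H) → T₂)
    (hp₂dense : (Submodule.span ℂ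
        {x : T₂ | ∃ η ∈ β, ∃ ζ : 𝔥, ∃ ξ ∈ α, p₂ η ζ ξ = x}).topologicalClosure = ⊤)
    (hp₂inner : ∀ η ∈ β, ∀ η' ∈ β, ∀ ξ ∈ α, ∀ ξ' ∈ α, ∀ ζ ζ' : 𝔥,
      inner ℂ (p₂ η ζ ξ) (p₂ η' ζ' ξ')
        = (inner ℂ ζ (((adjoint η ∘L η') ∘L (adjoint ξ ∘L ξ')) ζ') : ℂ)) :
    ∃ Sg : T₁ ≃ₗᵢ[ℂ] T₂, ∀ ξ ∈ α, ∀ (ζ : 𝔥), ∀ η ∈ β, Sg (p₁ ξ ζ η) = p₂ η ζ ξ := by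
  have hcomm_gram : ∀ ξ ∈ α, ∀ ξ' ∈ α, ∀ η ∈ β, ∀ η' ∈ β,
      (adjoint ξ ∘L ξ') ∘L (adjoint η ∘L η') = (adjoint η ∘L η') ∘L (adjoint ξ ∘L ξ') :=
    fun ξ hξ ξ' hξ' η hη η' hη' =>
      hcomm _ (hαα ▸ subset_clspan _ (Set.mem_image2_of_mem hξ hξ'))
        _ (hββ ▸ subset_clspan _ (Set.mem_image2_of_mem hη hη'))
  obtain ⟨Sg, hSg⟩ := exists_linearIsometryEquiv_of_inner_eq
    (q₁ := fun t : α × 𝔥 × β => p₁ t.1 t.2.1 t.2.2)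
    (q₂ := fun t : α × 𝔥 × β => p₂ t.2.2 t.2.1 t.1)
    (fun ⟨⟨ξ, hξ⟩, ζ, ⟨η, hη⟩⟩ ⟨⟨ξ', hξ'⟩, ζ', ⟨η', hη'⟩⟩ => by
      simp only [hp₁inner ξ hξ ξ' hξ' η hη η' hη', hp₂inner η hη η' hη' ξ hξ ξ' hξ',
        hcomm_gram ξ hξ ξ' hξ' η hη η' hη'])
    (by convert hp₁dense using 3; ext; simp)
    (by
      convert hp₂dense using 3
      ext
      simp only [Set.mem_range, Prod.exists, Subtype.exists, Set.mem_ofPred_eq]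
      exact ⟨fun ⟨ξ, hξ, ζ, η, hη, h⟩ => ⟨η, hη, ζ, ξ, hξ, h⟩,
        fun ⟨η, hη, ζ, ξ, hξ, h⟩ => ⟨ξ, hξ, ζ, η, hη, h⟩⟩)
  exact ⟨Sg, fun ξ hξ ζ η hη => hSg (⟨ξ, hξ⟩, ζ, ⟨η, hη⟩)⟩

/-- Let `α` be a C*-factorization of `H` over `(𝔥,𝔅,𝔅†)` and `β` a
C*-factorization of `K` over the opposite base.  Realize the relative tensor products
`H ⊗_{α,𝔥,β} K` and `K ⊗_{β,𝔥,α} H` as completions `T₁` of `α ⊙ 𝔥 ⊙ β` and `T₂` of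
`β ⊙ 𝔥 ⊙ α` with inner products `⟨ξ⊗ζ⊗η, ξ'⊗ζ'⊗η'⟩ = ⟨ζ, (ξ*ξ')(η*η')ζ'⟩` resp.
`⟨η⊗ζ⊗ξ, η'⊗ζ'⊗ξ'⟩ = ⟨ζ, (η*η')(ξ*ξ')ζ'⟩`.  Then there is a unitary
`Σ : T₁ ≃ T₂` with `Σ(ξ ⊗ ζ ⊗ η) = η ⊗ ζ ⊗ ξ`. -/
theorem stmt9
    {𝔥 H K T₁ T₂ : Type*} [NormedAddCommGroup 𝔥] [InnerProductSpace ℂ 𝔥] [CompleteSpace 𝔥]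
    [NormedAddCommGroup H] [InnerProductSpace ℂ H] [CompleteSpace H]
    [NormedAddCommGroup K] [InnerProductSpace ℂ K] [CompleteSpace K]
    [NormedAddCommGroup T₁] [InnerProductSpace ℂ T₁] [CompleteSpace T₁]
    [NormedAddCommGroup T₂] [InnerProductSpace ℂ T₂] [CompleteSpace T₂]
    (𝔅 𝔅d : Set (𝔥 →L[ℂ] 𝔥))
    (hcomm : ∀ b ∈ 𝔅, ∀ c ∈ 𝔅d, b ∘L c = c ∘L b)
    -- `α` is a C*-factorization of `H` w.r.t. `(𝔥,𝔅,𝔅†)`: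
    (α : Set (𝔥 →L[ℂ] H))
    (hαclosed : clspan α = α)
    (hαα : clspan (Set.image2 (fun (ξ ξ' : 𝔥 →L[ℂ] H) => adjoint ξ ∘L ξ') α α) = 𝔅)
    (hα𝔅 : clspan (Set.image2 (fun (ξ : 𝔥 →L[ℂ] H) (b : 𝔥 →L[ℂ] 𝔥) => ξ ∘L b) α 𝔅) = α)
    (hα𝔥 : (Submodule.span ℂ {x : H | ∃ ξ ∈ α, ∃ ζ : 𝔥, ξ ζ = x}).topologicalClosure = ⊤)
    -- `β` is a C*-factorization of `K` w.r.t. the opposite base `(𝔥,𝔅†,𝔅)`: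
    (β : Set (𝔥 →L[ℂ] K))
    (hβclosed : clspan β = β)
    (hββ : clspan (Set.image2 (fun (η η' : 𝔥 →L[ℂ] K) => adjoint η ∘L η') β β) = 𝔅d)
    (hβ𝔅d : clspan (Set.image2 (fun (η : 𝔥 →L[ℂ] K) (b : 𝔥 →L[ℂ] 𝔥) => η ∘L b) β 𝔅d) = β)
    (hβ𝔥 : (Submodule.span ℂ {x : K | ∃ η ∈ β, ∃ ζ : 𝔥, η ζ = x}).topologicalClosure = ⊤)
    -- `T₁`, `p₁` realize `H ⊗_{α,𝔥,β} K` as completion of `α ⊙ 𝔥 ⊙ β`: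
    (p₁ : (𝔥 →L[ℂ] H) → 𝔥 → (𝔥 →L[ℂ] K) → T₁)
    (hp₁add₁ : ∀ ξ ∈ α, ∀ ξ' ∈ α, ∀ ζ, ∀ η ∈ β, p₁ (ξ + ξ') ζ η = p₁ ξ ζ η + p₁ ξ' ζ η)
    (hp₁add₂ : ∀ ξ ∈ α, ∀ ζ ζ' : 𝔥, ∀ η ∈ β, p₁ ξ (ζ + ζ') η = p₁ ξ ζ η + p₁ ξ ζ' η)
    (hp₁add₃ : ∀ ξ ∈ α, ∀ ζ, ∀ η ∈ β, ∀ η' ∈ β, p₁ ξ ζ (η + η') = p₁ ξ ζ η + p₁ ξ ζ η')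
    (hp₁smul : ∀ ξ ∈ α, ∀ (c : ℂ) (ζ : 𝔥), ∀ η ∈ β, p₁ ξ (c • ζ) η = c • p₁ ξ ζ η)
    (hp₁dense : (Submodule.span ℂ
        {x : T₁ | ∃ ξ ∈ α, ∃ ζ : 𝔥, ∃ η ∈ β, p₁ ξ ζ η = x}).topologicalClosure = ⊤)
    (hp₁inner : ∀ ξ ∈ α, ∀ ξ' ∈ α, ∀ η ∈ β, ∀ η' ∈ β, ∀ ζ ζ' : 𝔥,
      inner ℂ (p₁ ξ ζ η) (p₁ ξ' ζ' η')
        = (inner ℂ ζ (((adjoint ξ ∘L ξ') ∘L (adjoint η ∘L η')) ζ') : ℂ))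
    -- `T₂`, `p₂` realize `K ⊗_{β,𝔥,α} H` as completion of `β ⊙ 𝔥 ⊙ α`:
    (p₂ : (𝔥 →L[ℂ] K) → 𝔥 → (𝔥 →L[ℂ] H) → T₂)
    (hp₂add₁ : ∀ η ∈ β, ∀ η' ∈ β, ∀ ζ, ∀ ξ ∈ α, p₂ (η + η') ζ ξ = p₂ η ζ ξ + p₂ η' ζ ξ)
    (hp₂add₂ : ∀ η ∈ β, ∀ ζ ζ' : 𝔥, ∀ ξ ∈ α, p₂ η (ζ + ζ') ξ = p₂ η ζ ξ + p₂ η ζ' ξ)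
    (hp₂add₃ : ∀ η ∈ β, ∀ ζ, ∀ ξ ∈ α, ∀ ξ' ∈ α, p₂ η ζ (ξ + ξ') = p₂ η ζ ξ + p₂ η ζ ξ')
    (hp₂smul : ∀ η ∈ β, ∀ (c : ℂ) (ζ : 𝔥), ∀ ξ ∈ α, p₂ η (c • ζ) ξ = c • p₂ η ζ ξ)
    (hp₂dense : (Submodule.span ℂ
        {x : T₂ | ∃ η ∈ β, ∃ ζ : 𝔥, ∃ ξ ∈ α, p₂ η ζ ξ = x}).topologicalClosure = ⊤)
    (hp₂inner : ∀ η ∈ β, ∀ η' ∈ β, ∀ ξ ∈ α, ∀ ξ' ∈ α, ∀ ζ ζ' : 𝔥,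
      inner ℂ (p₂ η ζ ξ) (p₂ η' ζ' ξ')
        = (inner ℂ ζ (((adjoint η ∘L η') ∘L (adjoint ξ ∘L ξ')) ζ') : ℂ)) :
    ∃ Sg : T₁ ≃ₗᵢ[ℂ] T₂, ∀ ξ ∈ α, ∀ (ζ : 𝔥), ∀ η ∈ β, Sg (p₁ ξ ζ η) = p₂ η ζ ξ :=
  stmt9_general 𝔅 𝔅d hcomm α hαα β hββ p₁ hp₁dense hp₁inner p₂ hp₂dense hp₂inner
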